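/- arXiv:1609.00920 — 2 statements merged into one kernel-verified Lean document; each statement's English description precedes it below -/
import Mathlib

section
/- Let 𝒟 be a category, let F, G, H : ℝ≤ ⥤ 𝒟 be functors, and let ε, δ ≥ 0. If F and G are ε-interleaved, and G and H are δ-interleaved, then F and H are (ε + δ)-interleaved. -/
open CategoryTheory

/-- The `ε`-translation functor on the poset category `ℝ≤`, sending `a` to `a + ε`. -/
def translationFunctor (ε : ℝ) : ℝ ⥤ ℝ :=
  Monotone.functor (f := fun a => a + ε) (fun _ _ h => by dsimp; linarith)

/-- Two diagrams `F G : ℝ≤ ⥤ 𝒟` are `ε`-interleaved: there are natural transformations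
`φ : F ⇒ G ∘ T_ε` and `ψ : G ⇒ F ∘ T_ε` with `ψ(a + ε) ∘ φ(a) = F(a ≤ a + 2ε)` and
`φ(a + ε) ∘ ψ(a) = G(a ≤ a + 2ε)` for all `a`. -/
def Interleaved {D : Type*} [Category D] (ε : ℝ) (hε : 0 ≤ ε) (F G : ℝ ⥤ D) : Prop :=
  ∃ (φ : F ⟶ translationFunctor ε ⋙ G) (ψ : G ⟶ translationFunctor ε ⋙ F),
    (∀ a : ℝ, φ.app a ≫ ψ.app (a + ε) =
      F.map (homOfLE (show a ≤ a + ε + ε by linarith))) ∧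
    (∀ a : ℝ, ψ.app a ≫ φ.app (a + ε) =
      G.map (homOfLE (show a ≤ a + ε + ε by linarith)))

/-!
Compose the interleaving maps: `F → H(· + ε + δ)` through `G(· + ε)`, and `H → F(· + δ + ε)`
through `G(· + δ)`. In the round trip from `F(a)`, the middle part `φ₂` followed by `ψ₂` is a
structure map of `G` by the `δ`-interleaving, naturality of `ψ₁` moves it past `ψ₁`, and the
`ε`-interleaving turns what is left into a structure map of `F`.
-/

def translationFunctorCompHom {ε δ γ : ℝ} (h : ε + δ ≤ γ) :
    translationFunctor ε ⋙ translationFunctor δ ⟶ translationFunctor γ where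
  app a := homOfLE (show a + ε + δ ≤ a + γ by linarith)

section

variable {D : Type*} [Category D] {F G H : ℝ ⥤ D} {ε δ γ : ℝ}

/-- `φ.app a`, with target `G.obj (a + ε)` rather than `(translationFunctor ε ⋙ G).obj a`:
the two agree only after unfolding `translationFunctor`, which `rw` and `simp` do not do. -/
def shiftedApp (φ : F ⟶ translationFunctor ε ⋙ G) (a : ℝ) : F.obj a ⟶ G.obj (a + ε) :=
  φ.app a

lemma map_comp_shiftedApp (φ : F ⟶ translationFunctor ε ⋙ G) {a b : ℝ} (hab : a ≤ b) :
    F.map (homOfLE hab) ≫ shiftedApp φ b =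
      shiftedApp φ a ≫ G.map (homOfLE (show a + ε ≤ b + ε by linarith)) :=
  φ.naturality (homOfLE hab)

lemma shiftedApp_comp_map_comp_shiftedApp (hε : 0 ≤ ε) {φ : F ⟶ translationFunctor ε ⋙ G}
    {ψ : G ⟶ translationFunctor ε ⋙ F}
    (hφψ : ∀ a : ℝ, shiftedApp φ a ≫ shiftedApp ψ (a + ε) =
      F.map (homOfLE (show a ≤ a + ε + ε by linarith)))
    {a b : ℝ} (hab : a + ε ≤ b) :
    shiftedApp φ a ≫ G.map (homOfLE hab) ≫ shiftedApp ψ b =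
      F.map (homOfLE (show a ≤ b + ε by linarith)) := by
  rw [map_comp_shiftedApp, reassoc_of% hφψ, ← F.map_comp]
  rfl

def shiftedComp (φ₁ : F ⟶ translationFunctor ε ⋙ G) (φ₂ : G ⟶ translationFunctor δ ⋙ H)
    (h : ε + δ ≤ γ) : F ⟶ translationFunctor γ ⋙ H :=
  φ₁ ≫ Functor.whiskerLeft (translationFunctor ε) φ₂ ≫
    Functor.whiskerRight (translationFunctorCompHom h) H

lemma shiftedApp_shiftedComp (φ₁ : F ⟶ translationFunctor ε ⋙ G)
    (φ₂ : G ⟶ translationFunctor δ ⋙ H) (h : ε + δ ≤ γ) (a : ℝ) :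
    shiftedApp (shiftedComp φ₁ φ₂ h) a = shiftedApp φ₁ a ≫ shiftedApp φ₂ (a + ε) ≫
      H.map (homOfLE (show a + ε + δ ≤ a + γ by linarith)) :=
  rfl

lemma shiftedComp_comp_shiftedComp (hε : 0 ≤ ε) (hδ : 0 ≤ δ)
    {φ₁ : F ⟶ translationFunctor ε ⋙ G} {ψ₁ : G ⟶ translationFunctor ε ⋙ F}
    {φ₂ : G ⟶ translationFunctor δ ⋙ H} {ψ₂ : H ⟶ translationFunctor δ ⋙ G}
    (hφψ₁ : ∀ a : ℝ, shiftedApp φ₁ a ≫ shiftedApp ψ₁ (a + ε) =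
      F.map (homOfLE (show a ≤ a + ε + ε by linarith)))
    (hφψ₂ : ∀ a : ℝ, shiftedApp φ₂ a ≫ shiftedApp ψ₂ (a + δ) =
      G.map (homOfLE (show a ≤ a + δ + δ by linarith)))
    (hφ : ε + δ ≤ γ) (hψ : δ + ε ≤ γ) (a : ℝ) :
    shiftedApp (shiftedComp φ₁ φ₂ hφ) a ≫ shiftedApp (shiftedComp ψ₂ ψ₁ hψ) (a + γ) =
      F.map (homOfLE (show a ≤ a + γ + γ by linarith)) := by
  have hG := shiftedApp_comp_map_comp_shiftedApp hδ hφψ₂ (show a + ε + δ ≤ a + γ by linarith)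
  have hF := shiftedApp_comp_map_comp_shiftedApp hε hφψ₁ (show a + ε ≤ a + γ + δ by linarith)
  simp only [shiftedApp_shiftedComp, Category.assoc]
  rw [reassoc_of% hG, reassoc_of% hF, ← F.map_comp]
  rfl

end

/-- **triangle inequality.** If `F` and `G` are `ε`-interleaved and `G` and
`H` are `δ`-interleaved, then `F` and `H` are `(ε + δ)`-interleaved. -/
theorem interleaved_trans {D : Type*} [Category D] (F G H : ℝ ⥤ D)
    (ε δ : ℝ) (hε : 0 ≤ ε) (hδ : 0 ≤ δ)
    (hFG : Interleaved ε hε F G) (hGH : Interleaved δ hδ G H) :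
    Interleaved (ε + δ) (by linarith) F H := by
  obtain ⟨φ₁, ψ₁, hφψ₁, hψφ₁⟩ := hFG
  obtain ⟨φ₂, ψ₂, hφψ₂, hψφ₂⟩ := hGH
  exact ⟨shiftedComp φ₁ φ₂ le_rfl, shiftedComp ψ₂ ψ₁ (add_comm δ ε).le,
    shiftedComp_comp_shiftedComp hε hδ hφψ₁ hφψ₂ _ _,
    shiftedComp_comp_shiftedComp hδ hε hψφ₂ hψφ₁ _ _⟩
end

section
/- Let p ≥ 0 and let F, G : ℝ≤ ⥤ Vec be functors into vector spaces over ℤ/2ℤ that are ε-interleaved for some ε ≥ 0. Define the p-persistence diagram P_pF : ℝ≤ ⥤ Vec by (P_pF)(a) = image of F(a ≤ a + p) (a subspace of F(a + p)), with (P_pF)(a ≤ b) the restriction of F(a + p ≤ b + p), and define P_pG analogously. Then P_pF and P_pG are ε-interleaved. -/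
open CategoryTheory

set_option maxHeartbeats 1000000
set_option synthInstance.maxHeartbeats 200000

/-- Composition law for the structure maps of a diagram on the poset `ℝ≤`. -/
theorem map_comp_homOfLE {F : ℝ ⥤ ModuleCat (ZMod 2)} {a b c : ℝ} (hab : a ≤ b) (hbc : b ≤ c) :
    ∀ x : F.obj a, (F.map (homOfLE hbc)) ((F.map (homOfLE hab)) x)
      = (F.map (homOfLE (hab.trans hbc))) x := by
  intro x
  have : F.map (homOfLE hab) ≫ F.map (homOfLE hbc) = F.map (homOfLE (hab.trans hbc)) := by
    rw [← F.map_comp]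
    rfl
  rw [← this]
  rfl

/-- The `p`-persistence diagram `P_pF` of a diagram `F : ℝ≤ ⥤ Vec`: its value at `a`
is the image of `F(a ≤ a + p)` (a subspace of `F(a + p)`), and its structure map for
`a ≤ b` is the restriction of `F(a + p ≤ b + p)`. -/
noncomputable def persist (p : ℝ) (hp : 0 ≤ p) (F : ℝ ⥤ ModuleCat (ZMod 2)) :
    ℝ ⥤ ModuleCat (ZMod 2) where
  obj a := ModuleCat.of (ZMod 2)
    (LinearMap.range (F.map (homOfLE (show a ≤ a + p by linarith))).hom)
  map {a b} h :=
    ModuleCat.ofHom <| LinearMap.restrict (F.map (homOfLE (show a + p ≤ b + p by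
        have := leOfHom h; linarith))).hom
      (by
        rintro x ⟨y, rfl⟩
        exact ⟨F.map (homOfLE (leOfHom h)) y, by
          simp only [← LinearMap.comp_apply, ← ModuleCat.hom_comp, ← F.map_comp]
          rfl⟩)
  map_id a := by
    apply ModuleCat.hom_ext
    apply LinearMap.ext
    intro x
    apply Subtype.ext
    show (F.map (homOfLE _)).hom x.1 = x.1
    rw [show (homOfLE (le_refl (a + p))) = 𝟙 (a + p) from rfl, F.map_id]
    rfl
  map_comp {a b c} hab hbc := by
    apply ModuleCat.hom_ext
    apply LinearMap.ext
    intro x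
    apply Subtype.ext
    show (F.map (homOfLE _)).hom x.1 = (F.map (homOfLE _)).hom ((F.map (homOfLE _)).hom x.1)
    exact (map_comp_homOfLE _ _ x.1).symm

/-! An interleaving `φ, ψ` of `F` and `G` restricts to the `p`-persistence diagrams: the component
at `a` is `φ(a + p)`, which by naturality maps the image of `F(a ≤ a + p)` into the image of
`G(a + ε ≤ a + ε + p)`. The interleaving identities hold on all of `F(a + p)` and `G(a + p)`,
hence on these subspaces. -/

theorem LinearMap.range_le_comap_range_of_comp_eq {R M N M' N' : Type*} [Semiring R]
    [AddCommMonoid M] [AddCommMonoid N] [AddCommMonoid M'] [AddCommMonoid N']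
    [Module R M] [Module R N] [Module R M'] [Module R N']
    {f : M →ₗ[R] N} {g : M' →ₗ[R] N'} {h : N →ₗ[R] N'} {k : M →ₗ[R] M'}
    (w : h ∘ₗ f = g ∘ₗ k) :
    LinearMap.range f ≤ (LinearMap.range g).comap h := by
  rw [← Submodule.map_le_iff_le_comap, ← LinearMap.range_comp, w]
  exact LinearMap.range_comp_le_range k g

section Shift

variable {D : Type*} [Category D] {F G : ℝ ⥤ D} {ε : ℝ}

-- `hyz` mentions `(translationFunctor ε).obj y`, not `y + ε`: only this form matches the
-- codomain of `φ.app y` syntactically, which `rw` needs.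
theorem map_comp_app_comp_map (φ : F ⟶ translationFunctor ε ⋙ G) {x y z : ℝ}
    (hxy : x ≤ y) (hyz : (translationFunctor ε).obj y ≤ z) :
    F.map (homOfLE hxy) ≫ φ.app y ≫ G.map (homOfLE hyz) =
      φ.app x ≫ G.map (homOfLE (show x + ε ≤ z from (add_le_add_left hxy ε).trans hyz)) := by
  rw [φ.naturality_assoc, Functor.comp_map, ← G.map_comp]
  rfl

def shiftApp (φ : F ⟶ translationFunctor ε ⋙ G) (p a : ℝ) :
    F.obj (a + p) ⟶ G.obj (a + ε + p) :=
  φ.app (a + p) ≫ G.map (homOfLE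
    (show (translationFunctor ε).obj (a + p) ≤ a + ε + p from (add_right_comm a p ε).le))

theorem map_comp_shiftApp (φ : F ⟶ translationFunctor ε ⋙ G) (p : ℝ) {a b : ℝ} (hab : a ≤ b) :
    F.map (homOfLE (show a + p ≤ b + p by linarith)) ≫ shiftApp φ p b =
      shiftApp φ p a ≫ G.map (homOfLE (show a + ε + p ≤ b + ε + p by linarith)) := by
  rw [shiftApp, map_comp_app_comp_map, shiftApp, Category.assoc, ← G.map_comp]
  rfl

theorem shiftApp_comp_shiftApp {φ : F ⟶ translationFunctor ε ⋙ G}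
    {ψ : G ⟶ translationFunctor ε ⋙ F} (p a : ℝ) {hle : a + p ≤ a + p + ε + ε}
    (h : φ.app (a + p) ≫ ψ.app (a + p + ε) = F.map (homOfLE hle)) :
    shiftApp φ p a ≫ shiftApp ψ p (a + ε) =
      F.map (homOfLE (show a + p ≤ a + ε + ε + p by linarith)) := by
  have h' : φ.app (a + p) ≫ ψ.app ((translationFunctor ε).obj (a + p)) =
      F.map (homOfLE hle) := h
  simp only [shiftApp, Category.assoc]
  rw [map_comp_app_comp_map, ← Category.assoc, h']
  exact (F.map_comp (homOfLE hle) (homOfLE _)).symm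

end Shift

section Persistence

variable (p : ℝ) (hp : 0 ≤ p) {F G : ℝ ⥤ ModuleCat (ZMod 2)} {ε : ℝ}

noncomputable def persistNatTrans (φ : F ⟶ translationFunctor ε ⋙ G) :
    persist p hp F ⟶ translationFunctor ε ⋙ persist p hp G where
  app a := ModuleCat.ofHom <| LinearMap.restrict (shiftApp φ p a).hom <|
    LinearMap.range_le_comap_range_of_comp_eq <| congrArg ModuleCat.Hom.hom <|
      map_comp_app_comp_map φ (show a ≤ a + p by linarith) (add_right_comm a p ε).le
  naturality {a b} hab := by
    ext x
    exact Subtype.ext (ConcreteCategory.congr_hom (map_comp_shiftApp φ p (leOfHom hab)) x.1)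

theorem persistNatTrans_comp_persistNatTrans {φ : F ⟶ translationFunctor ε ⋙ G}
    {ψ : G ⟶ translationFunctor ε ⋙ F} (a : ℝ) {hle : a + p ≤ a + p + ε + ε}
    (h : φ.app (a + p) ≫ ψ.app (a + p + ε) = F.map (homOfLE hle)) :
    (persistNatTrans p hp φ).app a ≫ (persistNatTrans p hp ψ).app (a + ε) =
      (persist p hp F).map (homOfLE (show a ≤ a + ε + ε by linarith)) := by
  ext x
  exact Subtype.ext (ConcreteCategory.congr_hom (shiftApp_comp_shiftApp p a h) x.1)

end Persistence

/-- If `F, G : ℝ≤ ⥤ Vec` are `ε`-interleaved, then for every `p ≥ 0`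
the `p`-persistence diagrams `P_pF` and `P_pG` are `ε`-interleaved. -/
theorem persist_interleaved (p : ℝ) (hp : 0 ≤ p) (F G : ℝ ⥤ ModuleCat (ZMod 2))
    (ε : ℝ) (hε : 0 ≤ ε) (h : Interleaved ε hε F G) :
    Interleaved ε hε (persist p hp F) (persist p hp G) := by
  obtain ⟨φ, ψ, hφψ, hψφ⟩ := h
  exact ⟨persistNatTrans p hp φ, persistNatTrans p hp ψ,
    fun a => persistNatTrans_comp_persistNatTrans p hp a (hφψ (a + p)),
    fun a => persistNatTrans_comp_persistNatTrans p hp a (hψφ (a + p))⟩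
end
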